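/- (Adjointness of the EAKF and ETKF transformations.) Let E ∈ ℝ^{d×M}, let S ∈ ℝ^{d×d} be symmetric positive semidefinite and a ≥ 0. Then ( ∫₀^∞ t^{−1/2} e^{−t} exp(−t a (E Eᵀ S)) dt ) · E = √π · E · ((Id_M + a Eᵀ S E)⁻¹)^{1/2}, where the right-hand square root is the positive semidefinite square root of the inverse of the positive definite matrix Id_M + a Eᵀ S E. -/

import Mathlib

open Matrix MeasureTheory
open scoped Matrix.Norms.L2Operator NNReal RealInnerProductSpace

open scoped ComplexOrder in
/-- The square root of a positive semidefinite matrix (as defined in Mathlib, December 2024). -/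
noncomputable def Matrix.PosSemidef.sqrt {n 𝕜 : Type*} [Fintype n] [DecidableEq n] [RCLike 𝕜]
    {A : Matrix n n 𝕜} (hA : A.PosSemidef) : Matrix n n 𝕜 :=
  hA.1.eigenvectorUnitary.1 * diagonal ((↑) ∘ (√·) ∘ hA.1.eigenvalues) *
    (star hA.1.eigenvectorUnitary : Matrix n n 𝕜)

/-- The ensemble mean `x̄ = (1/M) ∑ᵢ X⁽ⁱ⁾`. -/
noncomputable def ensMean {d M : ℕ} (X : Fin M → EuclideanSpace ℝ (Fin d)) :
    EuclideanSpace ℝ (Fin d) :=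
  (M : ℝ)⁻¹ • ∑ i, X i

/-- The matrix of ensemble deviations, with columns `X⁽ⁱ⁾ − x̄`. -/
noncomputable def devMat {d M : ℕ} (X : Fin M → EuclideanSpace ℝ (Fin d)) :
    Matrix (Fin d) (Fin M) ℝ :=
  Matrix.of fun j i => (X i - ensMean X) j

/-- The trace of the empirical covariance matrix,
`tr(P) = (1/(M−1)) ∑ᵢ ‖X⁽ⁱ⁾ − x̄‖²`. -/
noncomputable def trP {d M : ℕ} (X : Fin M → EuclideanSpace ℝ (Fin d)) : ℝ :=
  ((M : ℝ) - 1)⁻¹ * ∑ i, ‖X i - ensMean X‖ ^ 2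

/-!
With `N := Eᵀ S E` positive semidefinite, the matrix `X := E Eᵀ S` satisfies `X E = E N`, hence
`exp (-u X) E = E exp (-u N)`. Moving `E` through the integral turns the left-hand side into
`E ∫₀^∞ t^{-1/2} e^{-t} exp (-t a N) dt`, which the functional calculus of `N` evaluates
eigenvalue by eigenvalue: `∫₀^∞ t^{-1/2} e^{-(1 + a λ) t} dt = √π (1 + a λ)^{-1/2}`.

The one analytic point is that the `d × d` integrand is Bochner integrable although `X` need not
be normal: the derivative of `u ↦ exp (-u X)` is `-E exp (-u N) Eᵀ S`, and `‖exp (-u N)‖ ≤ 1`,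
so `‖exp (-u X)‖` grows at most linearly.
-/

namespace Real

open Set

theorem inv_sqrt_eq_rpow_neg_half {t : ℝ} (ht : 0 ≤ t) : (√t)⁻¹ = t ^ (-(1 / 2) : ℝ) := by
  rw [rpow_neg ht, ← sqrt_eq_rpow]

theorem integrableOn_inv_sqrt_mul_exp_neg_mul {r : ℝ} (hr : 0 < r) :
    IntegrableOn (fun t => (√t)⁻¹ * exp (-(r * t))) (Ioi 0) := by
  refine (integrableOn_rpow_mul_exp_neg_mul_rpow (s := -(1 / 2)) (p := 1) (by norm_num) one_pos
    hr).congr_fun (fun t ht => ?_) measurableSet_Ioi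
  simp [inv_sqrt_eq_rpow_neg_half (le_of_lt ht)]

theorem integrableOn_sqrt_mul_exp_neg : IntegrableOn (fun t => √t * exp (-t)) (Ioi 0) := by
  refine (integrableOn_rpow_mul_exp_neg_mul_rpow (s := 1 / 2) (p := 1) (by norm_num) one_pos
    one_pos).congr_fun (fun t ht => ?_) measurableSet_Ioi
  simp [sqrt_eq_rpow]

theorem integral_inv_sqrt_mul_exp_neg_mul {r : ℝ} (hr : 0 < r) :
    ∫ t in Ioi 0, (√t)⁻¹ * exp (-(r * t)) = √π * (√r)⁻¹ := by
  rw [setIntegral_congr_fun measurableSet_Ioi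
      (g := fun t => t ^ ((1 / 2 : ℝ) - 1) * exp (-(r * t)))
      fun t ht => by norm_num [inv_sqrt_eq_rpow_neg_half (le_of_lt ht)],
    integral_rpow_mul_exp_neg_mul_Ioi one_half_pos hr, Gamma_one_half_eq, one_div,
    inv_rpow hr.le, ← sqrt_eq_rpow, mul_comm]

end Real

open Real Set in
theorem integrableOn_inv_sqrt_mul_exp_neg_smul {V : Type*} [NormedAddCommGroup V]
    [NormedSpace ℝ V] {H : ℝ → V} (hH : Continuous H) {c : ℝ}
    (hbound : ∀ t > 0, ‖H t‖ ≤ 1 + c * t) :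
    IntegrableOn (fun t => ((√t)⁻¹ * exp (-t)) • H t) (Ioi 0) := by
  have hf : IntegrableOn (fun t => (√t)⁻¹ * exp (-t)) (Ioi 0) := by
    simpa using integrableOn_inv_sqrt_mul_exp_neg_mul one_pos
  refine (hf.add (integrableOn_sqrt_mul_exp_neg.const_mul c)).mono' ?_
    (ae_restrict_of_forall_mem measurableSet_Ioi fun t ht => ?_)
  · refine ContinuousOn.aestronglyMeasurable ?_ measurableSet_Ioi
    exact ((continuous_sqrt.continuousOn.inv₀ fun t ht => (sqrt_pos.2 ht).ne').mul
      (by fun_prop)).smul hH.continuousOn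
  · have hsqrt : 0 < √t := sqrt_pos.2 ht
    calc ‖((√t)⁻¹ * exp (-t)) • H t‖ = (√t)⁻¹ * exp (-t) * ‖H t‖ := by
          rw [norm_smul, norm_of_nonneg (by positivity)]
      _ ≤ (√t)⁻¹ * exp (-t) * (1 + c * t) := by grw [hbound t ht]
      _ = (√t)⁻¹ * exp (-t) + c * (√t * exp (-t)) := by
          field_simp
          rw [sq_sqrt (le_of_lt ht)]

theorem continuous_exp_neg_smul {𝔸 : Type*} [NormedRing 𝔸] [NormedAlgebra ℝ 𝔸] [CompleteSpace 𝔸]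
    (x : 𝔸) : Continuous fun u : ℝ => NormedSpace.exp (-(u • x)) := by
  simp_rw [← smul_neg]
  exact continuous_iff_continuousAt.2 fun u => (hasDerivAt_exp_smul_const (-x) u).continuousAt

namespace Matrix

section Rectangular

variable {l m n : Type*} [Fintype l] [Fintype m] [Fintype n]

theorem integral_mul_const [DecidableEq m] [DecidableEq n] {X : Type*} [MeasurableSpace X]
    {μ : Measure X} {φ : X → Matrix l m ℝ} (hφ : Integrable φ μ) (Y : Matrix m n ℝ) :
    (∫ x, φ x ∂μ) * Y = ∫ x, φ x * Y ∂μ :=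
  ((mulRightLinearMap l ℝ Y).toContinuousLinearMap.integral_comp_comm hφ).symm

theorem integral_const_mul [DecidableEq n] {X : Type*} [MeasurableSpace X] {μ : Measure X}
    {φ : X → Matrix m n ℝ} (hφ : Integrable φ μ) (Y : Matrix l m ℝ) :
    Y * ∫ x, φ x ∂μ = ∫ x, Y * φ x ∂μ :=
  ((mulLeftLinearMap n ℝ Y).toContinuousLinearMap.integral_comp_comm hφ).symm

theorem exp_mul_eq_mul_exp_of_mul_eq [DecidableEq m] [DecidableEq n] {A : Matrix m m ℝ}
    {B : Matrix n n ℝ} {Y : Matrix m n ℝ} (h : A * Y = Y * B) :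
    NormedSpace.exp A * Y = Y * NormedSpace.exp B := by
  have hpow (k : ℕ) : A ^ k * Y = Y * B ^ k := by
    induction k with
    | zero => simp
    | succ k ih => rw [pow_succ, pow_succ, Matrix.mul_assoc, h, ← Matrix.mul_assoc, ih,
        Matrix.mul_assoc]
  simp only [NormedSpace.exp_eq_tsum ℝ]
  change addMonoidHomMulRight Y _ = addMonoidHomMulLeft Y _
  rw [(NormedSpace.expSeries_summable' A).map_tsum (addMonoidHomMulRight Y)
      (continuous_id.matrix_mul continuous_const),
    (NormedSpace.expSeries_summable' B).map_tsum (addMonoidHomMulLeft Y)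
      (continuous_const.matrix_mul continuous_id)]
  simp [hpow]

end Rectangular

variable {m n : Type*} [Fintype m] [Fintype n] [DecidableEq m] [DecidableEq n]

theorem PosSemidef.nonneg_of_mem_spectrum {N : Matrix n n ℝ} (hN : N.PosSemidef) {x : ℝ}
    (hx : x ∈ spectrum ℝ N) : 0 ≤ x := by
  obtain ⟨i, rfl⟩ := hN.1.spectrum_real_eq_range_eigenvalues ▸ hx
  exact hN.eigenvalues_nonneg i

theorem IsHermitian.exp_neg_smul_eq_cfc {N : Matrix n n ℝ} (hN : N.IsHermitian) (s : ℝ) :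
    NormedSpace.exp (-(s • N)) = cfc (fun x => Real.exp (-(s * x))) N := by
  have hsa : IsSelfAdjoint N := hN.isSelfAdjoint
  rw [cfc_comp' Real.exp (fun x => -(s * x)) N, CFC.real_exp_eq_normedSpace_exp, cfc_neg,
    cfc_const_mul_id s N]

theorem PosSemidef.norm_exp_neg_smul_le_one {N : Matrix n n ℝ} (hN : N.PosSemidef) {s : ℝ}
    (hs : 0 ≤ s) : ‖NormedSpace.exp (-(s • N))‖ ≤ 1 := by
  rw [hN.1.exp_neg_smul_eq_cfc]
  refine norm_cfc_le zero_le_one fun x hx => ?_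
  rw [Real.norm_of_nonneg (Real.exp_nonneg _), Real.exp_le_one_iff, neg_nonpos]
  exact mul_nonneg hs (hN.nonneg_of_mem_spectrum hx)

theorem norm_exp_neg_smul_mul_le {E : Matrix m n ℝ} {B : Matrix n m ℝ} (hBE : (B * E).PosSemidef)
    {u : ℝ} (hu : 0 ≤ u) : ‖NormedSpace.exp (-(u • (E * B)))‖ ≤ 1 + u * (‖E‖ * ‖B‖) := by
  have hderiv (s : ℝ) : HasDerivWithinAt (fun s : ℝ => NormedSpace.exp (s • -(E * B)))
      (NormedSpace.exp (s • -(E * B)) * -(E * B)) (Set.Icc 0 u) s :=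
    (hasDerivAt_exp_smul_const _ s).hasDerivWithinAt
  have hbound : ∀ s ∈ Set.Ico 0 u, ‖NormedSpace.exp (s • -(E * B)) * -(E * B)‖ ≤ ‖E‖ * ‖B‖ := by
    intro s hs
    have hcomm : s • -(E * B) * E = E * -(s • (B * E)) := by
      simp [Matrix.mul_assoc]
    rw [mul_neg, norm_neg, ← Matrix.mul_assoc, exp_mul_eq_mul_exp_of_mul_eq hcomm]
    calc ‖E * NormedSpace.exp (-(s • (B * E))) * B‖
        ≤ ‖E‖ * ‖NormedSpace.exp (-(s • (B * E)))‖ * ‖B‖ := by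
          grw [l2_opNorm_mul, l2_opNorm_mul]
      _ ≤ ‖E‖ * 1 * ‖B‖ := by grw [hBE.norm_exp_neg_smul_le_one hs.1]
      _ = ‖E‖ * ‖B‖ := by rw [mul_one]
  have hmvt := norm_image_sub_le_of_norm_deriv_le_segment' (fun s _ => hderiv s) hbound u
    ⟨hu, le_rfl⟩
  rw [zero_smul, NormedSpace.exp_zero, sub_zero, smul_neg] at hmvt
  have hone : ‖(1 : Matrix m m ℝ)‖ ≤ 1 := by
    rw [cstar_norm_def, map_one]
    exact ContinuousLinearMap.norm_id_le
  calc ‖NormedSpace.exp (-(u • (E * B)))‖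
      ≤ ‖(1 : Matrix m m ℝ)‖ + ‖NormedSpace.exp (-(u • (E * B))) - 1‖ :=
        norm_le_norm_add_norm_sub' _ _
    _ ≤ 1 + u * (‖E‖ * ‖B‖) := by linarith

open Real Set in
theorem PosSemidef.integral_inv_sqrt_mul_exp_neg_smul_exp {N : Matrix n n ℝ} (hN : N.PosSemidef)
    {a : ℝ} (ha : 0 ≤ a) :
    ∫ t in Ioi 0, ((√t)⁻¹ * exp (-t)) • NormedSpace.exp (-((t * a) • N)) =
      √π • cfc (fun z => (√(1 + a * z))⁻¹) N := by
  have hsa : IsSelfAdjoint N := hN.1.isSelfAdjoint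
  have haz {z : ℝ} (hz : z ∈ spectrum ℝ N) : 0 ≤ a * z :=
    mul_nonneg ha (hN.nonneg_of_mem_spectrum hz)
  have hintegrand (t : ℝ) : ((√t)⁻¹ * exp (-t)) • NormedSpace.exp (-((t * a) • N)) =
      cfc (fun z => (√t)⁻¹ * exp (-((1 + a * z) * t))) N := by
    rw [hN.1.exp_neg_smul_eq_cfc, ← cfc_const_mul _ _ N]
    congr 1
    funext z
    rw [mul_assoc, ← exp_add]
    ring_nf
  simp_rw [hintegrand]
  rw [← cfc_setIntegral measurableSet_Ioi _ (fun t => (√t)⁻¹ * exp (-t)) N,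
    ← cfc_const_mul _ _ N (N.finite_real_spectrum.continuousOn _)]
  · exact cfc_congr fun z hz => integral_inv_sqrt_mul_exp_neg_mul (by linarith [haz hz])
  · refine ContinuousOn.mul ?_ (by fun_prop)
    exact (continuous_sqrt.comp continuous_fst).continuousOn.inv₀
      fun p hp => (sqrt_pos.2 (mem_prod.1 hp).1).ne'
  · refine ae_restrict_of_forall_mem measurableSet_Ioi fun t (ht : 0 < t) z hz => ?_
    rw [norm_of_nonneg (by positivity)]
    gcongr
    nlinarith [haz hz]
  · simpa using (integrableOn_inv_sqrt_mul_exp_neg_mul one_pos).hasFiniteIntegral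

open scoped ComplexOrder in
theorem PosSemidef.sqrt_eq_cfc {𝕜 : Type*} [RCLike 𝕜] {A : Matrix n n 𝕜} (hA : A.PosSemidef) :
    hA.sqrt = cfc Real.sqrt A := by
  rw [hA.1.cfc_eq, IsHermitian.cfc, Unitary.conjStarAlgAut_apply, PosSemidef.sqrt]

theorem PosSemidef.inv_one_add_smul_eq_cfc {N : Matrix n n ℝ} (hN : N.PosSemidef) {a : ℝ}
    (ha : 0 ≤ a) : (1 + a • N)⁻¹ = cfc (fun z => (1 + a * z)⁻¹) N := by
  have hsa : IsSelfAdjoint N := hN.1.isSelfAdjoint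
  rw [cfc_inv (fun z => 1 + a * z) N fun z hz =>
      (add_pos_of_pos_of_nonneg one_pos (mul_nonneg ha (hN.nonneg_of_mem_spectrum hz))).ne',
    cfc_const_add 1 (fun z => a * z) N, cfc_const_mul_id a N, map_one,
    nonsing_inv_eq_ringInverse]

theorem PosSemidef.sqrt_inv_one_add_smul_eq_cfc {N : Matrix n n ℝ} (hN : N.PosSemidef) {a : ℝ}
    (ha : 0 ≤ a) (hB : ((1 + a • N)⁻¹).PosSemidef) :
    hB.sqrt = cfc (fun z => (√(1 + a * z))⁻¹) N := by
  rw [hB.sqrt_eq_cfc, hN.inv_one_add_smul_eq_cfc ha, ← cfc_comp' Real.sqrt _ N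
    Real.continuous_sqrt.continuousOn (N.finite_real_spectrum.continuousOn _) hN.1.isSelfAdjoint]
  exact cfc_congr fun z _ => Real.sqrt_inv _

end Matrix

/-- adjointness of the EAKF and ETKF transformations:
`(∫₀^∞ t^{−1/2} e^{−t} exp(−t a (EEᵀS)) dt) E = √π · E ((Id + a EᵀSE)⁻¹)^{1/2}`. -/
theorem eakf_etkf_adjointness {d M : ℕ} (E : Matrix (Fin d) (Fin M) ℝ)
    (S : Matrix (Fin d) (Fin d) ℝ) (hS : S.PosSemidef) (a : ℝ) (ha : 0 ≤ a)
    (hB : ((((1 : Matrix (Fin M) (Fin M) ℝ) + a • (Eᵀ * S * E)))⁻¹).PosSemidef) :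
    (∫ t in Set.Ioi (0 : ℝ),
        ((Real.sqrt t)⁻¹ * Real.exp (-t)) • NormedSpace.exp (-((t * a) • (E * Eᵀ * S)))) * E =
      Real.sqrt Real.pi • (E * hB.sqrt) := by
  have hN : (Eᵀ * S * E).PosSemidef := by
    simpa using hS.conjTranspose_mul_mul_same E
  have hX : E * Eᵀ * S = E * (Eᵀ * S) := Matrix.mul_assoc _ _ _
  have hF := integrableOn_inv_sqrt_mul_exp_neg_smul
      (H := fun t => NormedSpace.exp (-((t * a) • (E * Eᵀ * S))))
      ((continuous_exp_neg_smul _).comp (continuous_mul_const a))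
      (c := a * (‖E‖ * ‖Eᵀ * S‖)) fun t ht => by
    rw [hX]
    exact (norm_exp_neg_smul_mul_le hN (by positivity)).trans_eq (by ring)
  have hG := integrableOn_inv_sqrt_mul_exp_neg_smul
      (H := fun t => NormedSpace.exp (-((t * a) • (Eᵀ * S * E))))
      ((continuous_exp_neg_smul _).comp (continuous_mul_const a))
      (c := 0) fun t ht => by
    simpa using hN.norm_exp_neg_smul_le_one (by positivity)
  have hcomm (t : ℝ) :
      (((√t)⁻¹ * Real.exp (-t)) • NormedSpace.exp (-((t * a) • (E * Eᵀ * S)))) * E =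
        E * (((√t)⁻¹ * Real.exp (-t)) • NormedSpace.exp (-((t * a) • (Eᵀ * S * E)))) := by
    rw [Matrix.smul_mul, Matrix.exp_mul_eq_mul_exp_of_mul_eq
        (B := -((t * a) • (Eᵀ * S * E))) (by simp [Matrix.mul_assoc]),
      Matrix.mul_smul]
  rw [Matrix.integral_mul_const hF]
  simp_rw [hcomm]
  rw [← Matrix.integral_const_mul hG, hN.integral_inv_sqrt_mul_exp_neg_smul_exp ha,
    hN.sqrt_inv_one_add_smul_eq_cfc ha hB, Matrix.mul_smul]
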